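/- Let X be a topological vector space and F_n : X → ℝ̄ a sequence of level convex functions. Then the Γ-upper limit F''(x) = sup over open neighborhoods U of x of limsup_n inf_{y ∈ U} F_n(y) is level convex. -/

import Mathlib

open Filter

/-- A function into the extended reals is level convex if
`F (θ x + (1-θ) y) ≤ F x ⊔ F y` for all `θ ∈ (0,1)`. -/
def LevelConvex {X : Type*} [AddCommGroup X] [Module ℝ X] (F : X → EReal) : Prop :=
  ∀ θ : ℝ, 0 < θ → θ < 1 → ∀ x y : X, F (θ • x + (1 - θ) • y) ≤ F x ⊔ F y

/-- The Γ-upper limit of a sequence of functionals. -/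
noncomputable def gammaLimsup {X : Type*} [TopologicalSpace X]
    (F : ℕ → X → EReal) (x : X) : EReal :=
  ⨆ U ∈ {U : Set X | IsOpen U ∧ x ∈ U},
    Filter.limsup (fun n => ⨅ y ∈ U, F n y) Filter.atTop

/-! If the affine combination `θ V + (1 - θ) W` lies in `U`, then, for a level convex function `f`,
`inf_U f ≤ max (inf_V f) (inf_W f)`; applied to each `F n` and passed through the `limsup`, this
bounds the Γ-upper limit at `θ x + (1 - θ) y` by its values at `x` and `y`, because every open
neighbourhood of `θ x + (1 - θ) y` contains such a combination of open neighbourhoods of `x`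
and `y`. -/

theorem LevelConvex.biInf_le_sup_biInf {X : Type*} [AddCommGroup X] [Module ℝ X]
    {f : X → EReal} (hf : LevelConvex f) {θ : ℝ} (hθ0 : 0 < θ) (hθ1 : θ < 1)
    {U V W : Set X} (hVW : V ×ˢ W ⊆ (fun p : X × X => θ • p.1 + (1 - θ) • p.2) ⁻¹' U) :
    ⨅ z ∈ U, f z ≤ (⨅ z ∈ V, f z) ⊔ ⨅ z ∈ W, f z := by
  rw [biInf_sup_biInf]
  exact le_iInf₂ fun p hp => (biInf_le f (hVW hp)).trans (hf θ hθ0 hθ1 p.1 p.2)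

theorem limsup_biInf_le_gammaLimsup {X : Type*} [TopologicalSpace X] (F : ℕ → X → EReal)
    {V : Set X} (hVo : IsOpen V) {x : X} (hxV : x ∈ V) :
    limsup (fun n => ⨅ z ∈ V, F n z) atTop ≤ gammaLimsup F x :=
  le_iSup₂_of_le V ⟨hVo, hxV⟩ le_rfl

theorem levelConvex_gammaLimsup
    {X : Type*} [AddCommGroup X] [Module ℝ X] [TopologicalSpace X]
    [IsTopologicalAddGroup X] [ContinuousSMul ℝ X]
    (F : ℕ → X → EReal) (hF : ∀ n, LevelConvex (F n)) :
    LevelConvex (gammaLimsup F) := by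
  intro θ hθ0 hθ1 x y
  refine iSup₂_le fun U ⟨hUo, hU⟩ => ?_
  have hcomb : Continuous fun p : X × X => θ • p.1 + (1 - θ) • p.2 := by fun_prop
  obtain ⟨V, W, hVo, hxV, hWo, hyW, hVW⟩ :=
    mem_nhds_prod_iff'.1 (hcomb.continuousAt.preimage_mem_nhds (hUo.mem_nhds hU))
  calc limsup (fun n => ⨅ z ∈ U, F n z) atTop
      ≤ limsup (fun n => (⨅ z ∈ V, F n z) ⊔ ⨅ z ∈ W, F n z) atTop :=
        limsup_le_limsup (.of_forall fun n => (hF n).biInf_le_sup_biInf hθ0 hθ1 hVW)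
    _ = limsup (fun n => ⨅ z ∈ V, F n z) atTop ⊔ limsup (fun n => ⨅ z ∈ W, F n z) atTop :=
        limsup_max
    _ ≤ gammaLimsup F x ⊔ gammaLimsup F y :=
        sup_le_sup (limsup_biInf_le_gammaLimsup F hVo hxV) (limsup_biInf_le_gammaLimsup F hWo hyW)
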